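/- Order-statistic pruning lemma (core of Theorem 1): let x, y : Fin d → ℝ, let m and r be indices with m + r < d, and suppose the (m)-th smallest value among the coordinates of y is strictly greater than the (m+r)-th smallest value among the coordinates of x (0-indexed order statistics of the sorted coordinate multisets). Then the number of coordinates j with y j ≤ x j is at most m + (d - 1 - (m + r)) = d - r - 1. -/

import Mathlib

/-!
Every coordinate `j` with `y j ≤ x j` has `y j < s` or `t < x j`, where `s` is the `m`-th order
statistic of `y` and `t < s` the `(m + r)`-th one of `x`. In a sorted list only the entries before
position `k` lie strictly below the `k`-th entry and only those after it lie strictly above, so the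
first alternative occurs for at most `m` coordinates and the second for at most `d - 1 - (m + r)`.
-/

noncomputable def sortedCoords {d : ℕ} (u : Fin d → ℝ) : List ℝ :=
  (List.ofFn u).insertionSort (· ≤ ·)

open Finset

theorem List.countP_ofFn {α : Type*} {n : ℕ} (u : Fin n → α) (p : α → Prop)
    [DecidablePred p] : (List.ofFn u).countP (p ·) = #{j | p (u j)} := by
  rw [← Multiset.coe_countP, ← Fin.univ_val_map u, Multiset.countP_map]
  rfl

theorem List.countP_eq_card_filter_getElem {α : Type*} (l : List α) (p : α → Prop)
    [DecidablePred p] : l.countP (p ·) = #{i : Fin l.length | p l[i]} := by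
  conv_lhs => rw [← List.ofFn_getElem (xs := l)]
  exact List.countP_ofFn _ p

namespace List.SortedLE

variable {α : Type*} [Preorder α] [DecidableLT α] {l : List α}

theorem countP_lt_getElem_le (hl : l.SortedLE) (k : ℕ) (hk : k < l.length) :
    l.countP (fun a => a < l[k]) ≤ k := by
  rw [countP_eq_card_filter_getElem l (· < l[k])]
  calc #{i : Fin l.length | l[i] < l[k]}
      ≤ #(Iio (⟨k, hk⟩ : Fin l.length)) := by
        refine card_le_card fun i hi => mem_Iio.mpr (lt_of_not_ge fun hki => ?_)
        exact (Finset.mem_filter.mp hi).2.not_ge (hl.getElem_le_getElem_of_le hki)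
    _ = k := Fin.card_Iio _

theorem countP_getElem_lt_le (hl : l.SortedLE) (k : ℕ) (hk : k < l.length) :
    l.countP (fun a => l[k] < a) ≤ l.length - 1 - k := by
  rw [countP_eq_card_filter_getElem l (l[k] < ·)]
  calc #{i : Fin l.length | l[k] < l[i]}
      ≤ #(Ioi (⟨k, hk⟩ : Fin l.length)) := by
        refine card_le_card fun i hi => mem_Ioi.mpr (lt_of_not_ge fun hik => ?_)
        exact (Finset.mem_filter.mp hi).2.not_ge (hl.getElem_le_getElem_of_le hik)
    _ = l.length - 1 - k := Fin.card_Ioi _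

end List.SortedLE

theorem Finset.card_filter_le_le_add_of_lt {ι α : Type*} [DecidableEq ι] [LinearOrder α]
    (s : Finset ι) (x y : ι → α) {a b : α} (hab : a < b) :
    #{j ∈ s | y j ≤ x j} ≤ #{j ∈ s | y j < b} + #{j ∈ s | a < x j} := by
  calc #{j ∈ s | y j ≤ x j}
      ≤ #{j ∈ s | y j < b ∨ a < x j} :=
        card_le_card <| monotone_filter_right s fun j _ hj => (lt_or_ge (y j) b).imp_right
          fun hb => hab.trans_le (hb.trans hj)
    _ ≤ #{j ∈ s | y j < b} + #{j ∈ s | a < x j} := by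
        rw [filter_or]
        exact card_union_le _ _

section sortedCoords

variable {d : ℕ} (u : Fin d → ℝ)

theorem card_filter_lt_sortedCoords_le (k : ℕ) (hk : k < (sortedCoords u).length) :
    #{j | u j < (sortedCoords u)[k]} ≤ k := by
  rw [← List.countP_ofFn u (· < (sortedCoords u)[k]),
    ← (List.perm_insertionSort (· ≤ ·) (List.ofFn u)).countP_eq]
  exact List.sortedLE_insertionSort.countP_lt_getElem_le k hk

theorem card_filter_sortedCoords_lt_le (k : ℕ) (hk : k < (sortedCoords u).length) :
    #{j | (sortedCoords u)[k] < u j} ≤ d - 1 - k := by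
  rw [← List.countP_ofFn u ((sortedCoords u)[k] < ·),
    ← (List.perm_insertionSort (· ≤ ·) (List.ofFn u)).countP_eq]
  exact (List.sortedLE_insertionSort.countP_getElem_lt_le k hk).trans_eq (by simp)

end sortedCoords

theorem order_statistic_pruning {d : ℕ} (x y : Fin d → ℝ) (m r : ℕ)
    (hmr : m + r < d)
    (hgt : (sortedCoords x)[m + r]'(by
        simpa [sortedCoords, List.length_insertionSort, List.length_ofFn] using hmr)
      < (sortedCoords y)[m]'(by
        simp only [sortedCoords, List.length_insertionSort, List.length_ofFn]; omega)) :
    (Finset.univ.filter (fun j => y j ≤ x j)).card ≤ m + (d - 1 - (m + r)) :=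
  (card_filter_le_le_add_of_lt univ x y hgt).trans <|
    add_le_add (card_filter_lt_sortedCoords_le y m _) (card_filter_sortedCoords_lt_le x (m + r) _)
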